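/- arXiv:2204.07605 — 2 statements merged into one kernel-verified Lean document; each statement's English description precedes it below -/
import Mathlib

section
/- Let X be the polynomial hypergroup on ℕ generated by (P_n), r, N positive integers. A family of functions φ_α : ℕ → ℂ (α ∈ ℕ^r, |α| ≤ N) is a generalized moment sequence of rank r if and only if φ_α(n) = ∂^α(P_n ∘ f)(0) for all n and |α| ≤ N, where f : ℝ^r → ℂ is the polynomial f(t) = Σ_{|α|≤N} (φ_α(1)/α!) t^α. -/
open Polynomial

noncomputable section

def pderiv' {r : ℕ} (i : Fin r) (f : (Fin r → ℝ) → ℂ) : (Fin r → ℝ) → ℂ :=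
  fun x => deriv (fun t => f (Function.update x i t)) (x i)

/-- The mixed partial derivative `∂^α`. -/
def mpderiv {r : ℕ} (α : Fin r → ℕ) (f : (Fin r → ℝ) → ℂ) : (Fin r → ℝ) → ℂ :=
  (List.finRange r).foldr (fun i g => (pderiv' i)^[α i] g) f

/-- Multi-index binomial coefficient. -/
def mchoose {r : ℕ} (α β : Fin r → ℕ) : ℕ := ∏ i, Nat.choose (α i) (β i)

section Aux
open MvPolynomial
variable {r : ℕ}

def tf {r : ℕ} (α : Fin r → ℕ) : Fin r →₀ ℕ := Finsupp.equivFunOnFinite.symm α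

@[simp] lemma tf_apply (α : Fin r → ℕ) (j : Fin r) : tf α j = α j := rfl

def ev (x : Fin r → ℝ) (p : MvPolynomial (Fin r) ℂ) : ℂ :=
  eval (fun i => (x i : ℂ)) p

lemma hasDerivAt_ev (p : MvPolynomial (Fin r) ℂ) (i : Fin r) (x : Fin r → ℝ) :
    HasDerivAt (fun t : ℝ => ev (Function.update x i t) p) (ev x (pderiv i p)) (x i) := by
  have hyy : Function.update (fun j => (x j : ℂ)) i ((x i : ℂ)) = (fun j => (x j : ℂ)) :=
    Function.update_eq_self i _
  have key : ∀ p : MvPolynomial (Fin r) ℂ, HasDerivAt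
      (fun t : ℝ => eval (Function.update (fun j => (x j : ℂ)) i (t : ℂ)) p)
      (ev x (pderiv i p)) (x i) := by
    intro p
    induction p using MvPolynomial.induction_on with
    | C a => simp only [MvPolynomial.eval_C, ev, pderiv_C, MvPolynomial.eval_zero]; exact hasDerivAt_const _ _
    | add p q hp hq =>
      simp only [MvPolynomial.eval_add, map_add, ev] at *
      exact hp.add hq
    | mul_X p j hp =>
      simp only [MvPolynomial.eval_mul, MvPolynomial.eval_X, map_mul, ev] at *
      by_cases hij : j = i
      · subst hij
        simp only [Function.update_self]
        have h2 : HasDerivAt (fun t : ℝ => (t : ℂ)) 1 (x j) := by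
          exact (hasDerivAt_id (x j)).ofReal_comp
        have H := hp.mul h2
        rw [hyy] at H
        refine H.congr_deriv ?_
        rw [pderiv_mul, pderiv_X_self]
        simp
      · have hj : ∀ t : ℝ, Function.update (fun j => (x j : ℂ)) i (t : ℂ) j = (x j : ℂ) := by
          intro t; rw [Function.update_of_ne hij]
        simp only [hj]
        have H := hp.mul_const ((x j : ℂ))
        refine H.congr_deriv ?_
        rw [pderiv_mul, pderiv_X_of_ne hij]
        simp
      
  have harg : ∀ t : ℝ, (fun j => (Function.update x i t j : ℂ))
      = Function.update (fun j => (x j : ℂ)) i (t : ℂ) := by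
    intro t
    funext j
    by_cases h : j = i
    · subst h; simp
    · simp [Function.update_of_ne h]
  have hfun : (fun t : ℝ => ev (Function.update x i t) p)
      = (fun t : ℝ => eval (Function.update (fun j => (x j : ℂ)) i (t : ℂ)) p) := by
    funext t
    simp only [ev]
    rw [harg t]
  rw [hfun]
  exact key p

lemma coeff_pderiv' (i : Fin r) (p : MvPolynomial (Fin r) ℂ) (m : Fin r →₀ ℕ) :
    coeff m (pderiv i p) = ((m i : ℂ) + 1) * coeff (m + Finsupp.single i 1) p := by
  induction p using MvPolynomial.induction_on' with
  | monomial u a =>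
    rw [pderiv_monomial, MvPolynomial.coeff_monomial, MvPolynomial.coeff_monomial]
    by_cases h : Finsupp.single i 1 ≤ u
    · have hsub : u - Finsupp.single i 1 = m ↔ u = m + Finsupp.single i 1 :=
        tsub_eq_iff_eq_add_of_le h
      by_cases h2 : u = m + Finsupp.single i 1
      · rw [if_pos (hsub.2 h2), if_pos h2]
        have : u i = m i + 1 := by rw [h2]; simp
        rw [this]; push_cast; ring
      · rw [if_neg (fun hh => h2 (hsub.1 hh)), if_neg h2]; ring
    · rw [Finsupp.single_le_iff] at h
      have hu : u i = 0 := by omega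
      have hne : ¬ u = m + Finsupp.single i 1 := by
        intro he; rw [he] at hu; simp at hu
      rw [if_neg hne, hu]
      simp
  | add p q hp hq => simp [map_add, MvPolynomial.coeff_add, hp, hq, mul_add]

lemma coeff_pderiv_iter (i : Fin r) (k : ℕ) (p : MvPolynomial (Fin r) ℂ) (m : Fin r →₀ ℕ)
    (hm : m i = 0) :
    coeff m ((pderiv i)^[k] p) = (Nat.factorial k : ℂ) * coeff (m + Finsupp.single i k) p := by
  suffices H : ∀ (k : ℕ) (m : Fin r →₀ ℕ), coeff m ((pderiv i)^[k] p)
      = (∏ j ∈ Finset.range k, ((m i : ℂ) + j + 1)) * coeff (m + Finsupp.single i k) p by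
    rw [H k m]
    congr 1
    rw [hm]
    induction k with
    | zero => simp
    | succ n ih => rw [Finset.prod_range_succ, ih, Nat.factorial_succ]; push_cast; ring
  clear hm m
  intro k
  induction k with
  | zero => intro m; simp
  | succ k ih =>
    intro m
    have h1 : m + Finsupp.single i 1 + Finsupp.single i k = m + Finsupp.single i (k+1) := by
      rw [add_assoc, ← Finsupp.single_add, Nat.add_comm]
    rw [Function.iterate_succ_apply', coeff_pderiv' i _ m, ih (m + Finsupp.single i 1), h1,
      ← mul_assoc]
    congr 1
    simp only [Finsupp.add_apply, Finsupp.single_eq_same]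
    rw [Finset.prod_range_succ']
    rw [mul_comm]
    congr 1
    · apply Finset.prod_congr rfl; intro j _; push_cast; ring
    · ring

def Dl (α : Fin r → ℕ) (p : MvPolynomial (Fin r) ℂ) : MvPolynomial (Fin r) ℂ :=
  (List.finRange r).foldr (fun i q => (pderiv i)^[α i] q) p

lemma tf_sum_single (α : Fin r → ℕ) : (∑ i, Finsupp.single i (α i)) = tf α := by
  ext j
  rw [Finsupp.finset_sum_apply]
  simp [Finsupp.single_apply]

lemma coeff_foldr (α : Fin r → ℕ) (p : MvPolynomial (Fin r) ℂ) :
    ∀ l : List (Fin r), l.Nodup → ∀ m : Fin r →₀ ℕ, (∀ i ∈ l, m i = 0) →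
    coeff m (l.foldr (fun i q => (pderiv i)^[α i] q) p) =
      (l.map fun i => ((α i).factorial : ℂ)).prod *
        coeff (m + (l.map fun i => Finsupp.single i (α i)).sum) p := by
  intro l
  induction l with
  | nil => intro _ m _; simp
  | cons i l ih =>
    intro hnd m hm
    have hmi : m i = 0 := hm i List.mem_cons_self
    rw [List.foldr_cons, coeff_pderiv_iter i (α i) _ m hmi]
    rw [ih hnd.of_cons (m + Finsupp.single i (α i)) ?_]
    · rw [List.map_cons, List.map_cons, List.prod_cons, List.sum_cons]
      rw [mul_assoc, add_assoc]
    · intro j hj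
      have hji : j ≠ i := by
        intro h; subst h; exact (List.nodup_cons.1 hnd).1 hj
      have : Finsupp.single i (α i) j = 0 := Finsupp.single_eq_of_ne hji
      rw [Finsupp.add_apply, this, hm j (List.mem_cons_of_mem i hj)]

lemma coeff_zero_Dl (α : Fin r → ℕ) (p : MvPolynomial (Fin r) ℂ) :
    coeff 0 (Dl α p) = (∏ i, ((α i).factorial : ℂ)) * coeff (tf α) p := by
  rw [Dl, coeff_foldr α p _ (List.nodup_finRange r) 0 (fun _ _ => rfl)]
  rw [← Fin.prod_univ_def, zero_add]
  congr 2
  rw [← tf_sum_single, Fin.sum_univ_def]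

lemma pderiv'_ev (i : Fin r) (p : MvPolynomial (Fin r) ℂ) :
    pderiv' i (fun x => ev x p) = fun x => ev x (pderiv i p) := by
  funext x
  exact (hasDerivAt_ev p i x).deriv

lemma pderiv'_iter_ev (i : Fin r) (k : ℕ) (p : MvPolynomial (Fin r) ℂ) :
    (pderiv' i)^[k] (fun x => ev x p) = fun x => ev x ((pderiv i)^[k] p) := by
  induction k generalizing p with
  | zero => rfl
  | succ k ih =>
    rw [Function.iterate_succ_apply, Function.iterate_succ_apply, pderiv'_ev, ih]

lemma mpderiv_ev (α : Fin r → ℕ) (p : MvPolynomial (Fin r) ℂ) :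
    mpderiv α (fun x => ev x p) = fun x => ev x (Dl α p) := by
  unfold mpderiv Dl
  induction (List.finRange r) with
  | nil => rfl
  | cons i l ih => simp only [List.foldr_cons, ih, pderiv'_iter_ev]

lemma antidiag_sum (α : Fin r → ℕ) (F : (Fin r →₀ ℕ) → (Fin r →₀ ℕ) → ℂ) :
    ∑ x ∈ Finset.HasAntidiagonal.antidiagonal (tf α), F x.1 x.2
      = ∑ β ∈ Finset.Iic α, F (tf β) (tf (α - β)) := by
  have hadd : ∀ x : (Fin r →₀ ℕ) × (Fin r →₀ ℕ), x ∈ Finset.HasAntidiagonal.antidiagonal (tf α) →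
      ∀ k, x.1 k + x.2 k = α k := by
    intro x hx k
    rw [Finset.HasAntidiagonal.mem_antidiagonal] at hx
    rw [← Finsupp.add_apply, hx]
    rfl
  refine Finset.sum_nbij' (fun x : (Fin r →₀ ℕ) × (Fin r →₀ ℕ) => (x.1 : Fin r → ℕ))
    (fun β => (tf β, tf (α - β))) ?_ ?_ ?_ ?_ ?_
  · intro x hx
    rw [Finset.mem_Iic, Pi.le_def]
    intro k
    show x.1 k ≤ α k
    have := hadd x hx k
    omega
  · intro β hβ
    rw [Finset.mem_Iic, Pi.le_def] at hβ
    rw [Finset.HasAntidiagonal.mem_antidiagonal]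
    ext k
    have := hβ k
    simp only [Finsupp.add_apply, tf_apply, Pi.sub_apply]
    omega
  · intro x hx
    have h1 := hadd x hx
    have e1 : tf (fun k => x.1 k) = x.1 := Finsupp.equivFunOnFinite_symm_coe x.1
    have e2 : tf (α - fun k => x.1 k) = x.2 := by
      ext k
      simp only [tf_apply, Pi.sub_apply]
      have := h1 k
      omega
    show (tf (fun k => x.1 k), tf (α - fun k => x.1 k)) = x
    rw [e1, e2]
  · intro β hβ
    funext k
    simp
  · intro x hx
    have h1 := hadd x hx
    have e1 : tf (fun k => x.1 k) = x.1 := Finsupp.equivFunOnFinite_symm_coe x.1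
    have e2 : tf (α - fun k => x.1 k) = x.2 := by
      ext k
      simp only [tf_apply, Pi.sub_apply]
      have := h1 k
      omega
    show F x.1 x.2 = F (tf (fun k => x.1 k)) (tf (α - fun k => x.1 k))
    rw [e1, e2]

lemma mchoose_factorial (α β : Fin r → ℕ) (h : β ≤ α) :
    (mchoose α β : ℂ) * (∏ i, ((β i).factorial : ℂ)) * (∏ i, (((α - β) i).factorial : ℂ))
      = ∏ i, ((α i).factorial : ℂ) := by
  rw [mchoose]
  push_cast
  rw [← Finset.prod_mul_distrib, ← Finset.prod_mul_distrib]
  apply Finset.prod_congr rfl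
  intro i _
  have hi : β i ≤ α i := h i
  have := Nat.choose_mul_factorial_mul_factorial hi
  have hsub : (α - β) i = α i - β i := rfl
  rw [hsub]
  push_cast [← this]
  ring

lemma tf_inj {α β : Fin r → ℕ} (h : tf α = tf β) : α = β :=
  Finsupp.equivFunOnFinite.symm.injective h

lemma prod_X_pow (α : Fin r → ℕ) :
    (∏ i, (X i : MvPolynomial (Fin r) ℂ) ^ α i) = monomial (tf α) 1 := by
  rw [← MvPolynomial.prod_X_pow_eq_monomial]
  symm
  apply Finset.prod_subset (Finset.subset_univ _)
  intro i _ hi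
  rw [Finsupp.notMem_support_iff] at hi
  rw [tf_apply] at hi ⊢
  rw [hi, pow_zero]

def SN (r N : ℕ) : Finset (Fin r → ℕ) :=
  (Finset.Iic (fun _ => N : Fin r → ℕ)).filter (fun α => ∑ i, α i ≤ N)

lemma mem_SN {N : ℕ} {α : Fin r → ℕ} (h : ∑ i, α i ≤ N) : α ∈ SN r N := by
  rw [SN, Finset.mem_filter, Finset.mem_Iic]
  refine ⟨fun i => ?_, h⟩
  calc α i ≤ ∑ j, α j := Finset.single_le_sum (fun j _ => Nat.zero_le _) (Finset.mem_univ i)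
  _ ≤ N := h

def Fpoly (r N : ℕ) (φ : (Fin r → ℕ) → ℕ → ℂ) : MvPolynomial (Fin r) ℂ :=
  ∑ α ∈ SN r N, MvPolynomial.C (φ α 1 / (∏ i, Nat.factorial (α i) : ℂ)) * ∏ i, X i ^ α i

lemma ev_Fpoly (r N : ℕ) (φ : (Fin r → ℕ) → ℕ → ℂ) (f : (Fin r → ℝ) → ℂ)
    (hf : ∀ t, f t = ∑ α ∈ (Finset.Iic (fun _ => N : Fin r → ℕ)).filter
        (fun α => ∑ i, α i ≤ N),
      (φ α 1 / (∏ i, Nat.factorial (α i) : ℂ)) * ∏ i, (t i : ℂ) ^ (α i)) (x : Fin r → ℝ) :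
    ev x (Fpoly r N φ) = f x := by
  rw [hf x, Fpoly, ev, map_sum]
  apply Finset.sum_congr rfl
  intro α _
  rw [MvPolynomial.eval_mul, MvPolynomial.eval_C, map_prod]
  simp

lemma coeff_Fpoly (r N : ℕ) (φ : (Fin r → ℕ) → ℕ → ℂ) (β : Fin r → ℕ) (hβ : ∑ i, β i ≤ N) :
    coeff (tf β) (Fpoly r N φ) = φ β 1 / (∏ i, Nat.factorial (β i) : ℂ) := by
  have hmem : β ∈ SN r N := mem_SN hβ
  rw [Fpoly]
  rw [MvPolynomial.coeff_sum]
  rw [Finset.sum_eq_single_of_mem β hmem]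
  · rw [prod_X_pow, MvPolynomial.coeff_C_mul, MvPolynomial.coeff_monomial, if_pos rfl, mul_one]
  · intro α _ hne
    rw [prod_X_pow, MvPolynomial.coeff_C_mul, MvPolynomial.coeff_monomial,
      if_neg (fun h => hne (tf_inj h)), mul_zero]

lemma ev_aeval (x : Fin r → ℝ) (F : MvPolynomial (Fin r) ℂ) (p : Polynomial ℝ) :
    ev x (Polynomial.aeval F p) = Polynomial.aeval (ev x F) p := by
  let E : MvPolynomial (Fin r) ℂ →ₐ[ℝ] ℂ :=
    (MvPolynomial.aeval (R := ℂ) (fun i => (x i : ℂ))).restrictScalars ℝ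
  have hE : ∀ q : MvPolynomial (Fin r) ℂ, E q = ev x q := by
    intro q
    show MvPolynomial.aeval _ q = ev x q
    rw [MvPolynomial.aeval_def, ev]
    rw [Algebra.algebraMap_self]
    rfl
  rw [← hE, ← hE, ← Polynomial.aeval_algHom_apply]

lemma algebraMap_real_mv (a : ℝ) :
    algebraMap ℝ (MvPolynomial (Fin r) ℂ) a = MvPolynomial.C ((a : ℂ)) := by
  rw [IsScalarTower.algebraMap_apply ℝ ℂ (MvPolynomial (Fin r) ℂ)]
  rfl

lemma aeval_linear (F : MvPolynomial (Fin r) ℂ) (P : ℕ → Polynomial ℝ) (lc : ℕ → ℝ)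
    (s : Finset ℕ) :
    Polynomial.aeval F (∑ k ∈ s, Polynomial.C (lc k) * P k)
      = ∑ k ∈ s, MvPolynomial.C ((lc k : ℂ)) * Polynomial.aeval F (P k) := by
  rw [map_sum]
  apply Finset.sum_congr rfl
  intro k _
  rw [map_mul, Polynomial.aeval_C, algebraMap_real_mv]

lemma Pdeg (a b c : ℕ → ℝ) (P : ℕ → Polynomial ℝ)
    (hc : ∀ n, 0 < c n)
    (hP0 : P 0 = 1) (hP1 : P 1 = Polynomial.X)
    (hrec : ∀ n, 1 ≤ n →
      Polynomial.X * P n = Polynomial.C (a n) * P (n - 1) + Polynomial.C (b n) * P n + Polynomial.C (c n) * P (n + 1)) :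
    ∀ n, (P n).natDegree ≤ n ∧ (P n).coeff n ≠ 0 := by
  intro n
  induction n using Nat.strong_induction_on with
  | _ n ih =>
    match n with
    | 0 => rw [hP0]; simp
    | 1 => rw [hP1]; simp
    | (k+2) =>
      have h1 := hrec (k+1) (Nat.le_add_left 1 k)
      have hkk : k + 1 - 1 = k := rfl
      rw [hkk] at h1
      have hck : c (k+1) ≠ 0 := ne_of_gt (hc (k+1))
      have hPk := ih k (by omega)
      have hPk1 := ih (k+1) (by omega)
      have heq : Polynomial.C (c (k+1)) * P (k+2) = Polynomial.X * P (k+1) - Polynomial.C (a (k+1)) * P k - Polynomial.C (b (k+1)) * P (k+1) := by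
        rw [h1]; ring
      constructor
      · have hd : (Polynomial.C (c (k+1)) * P (k+2)).natDegree ≤ k + 2 := by
          rw [heq]
          apply le_trans (Polynomial.natDegree_sub_le _ _)
          apply max_le
          · apply le_trans (Polynomial.natDegree_sub_le _ _)
            apply max_le
            · apply le_trans (Polynomial.natDegree_mul_le)
              have := hPk1.1
              simp only [Polynomial.natDegree_X]
              omega
            · apply le_trans (Polynomial.natDegree_mul_le)
              have := hPk.1
              simp only [Polynomial.natDegree_C]
              omega
          · apply le_trans (Polynomial.natDegree_mul_le)
            have := hPk1.1
            simp only [Polynomial.natDegree_C]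
            omega
        rwa [Polynomial.natDegree_C_mul hck] at hd
      · have hco : Polynomial.coeff (Polynomial.C (c (k+1)) * P (k+2)) (k+2) = Polynomial.coeff (P (k+1)) (k+1) := by
          rw [heq]
          rw [Polynomial.coeff_sub, Polynomial.coeff_sub]
          have e1 : Polynomial.coeff (Polynomial.X * P (k+1)) (k+2) = Polynomial.coeff (P (k+1)) (k+1) := by
            rw [Polynomial.coeff_X_mul]
          have e2 : Polynomial.coeff (Polynomial.C (a (k+1)) * P k) (k+2) = 0 := by
            rw [Polynomial.coeff_C_mul, Polynomial.coeff_eq_zero_of_natDegree_lt (lt_of_le_of_lt hPk.1 (by omega : k < k+2)), mul_zero]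
          have e3 : Polynomial.coeff (Polynomial.C (b (k+1)) * P (k+1)) (k+2) = 0 := by
            rw [Polynomial.coeff_C_mul, Polynomial.coeff_eq_zero_of_natDegree_lt (lt_of_le_of_lt hPk1.1 (by omega)), mul_zero]
          rw [e1, e2, e3]
          ring
        rw [Polynomial.coeff_C_mul] at hco
        intro hzero
        rw [hzero, mul_zero] at hco
        exact hPk1.2 hco.symm

lemma lc_000 (P : ℕ → Polynomial ℝ) (lc : ℕ → ℕ → ℕ → ℝ) (hP0 : P 0 = 1)
    (hlin : ∀ m n, P m * P n =
      ∑ k ∈ Finset.Icc (Nat.dist m n) (m + n), Polynomial.C (lc m n k) * P k) :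
    lc 0 0 0 = 1 := by
  have h := hlin 0 0
  rw [hP0] at h
  have : Nat.dist 0 0 = 0 := by simp [Nat.dist]
  rw [this] at h
  simp only [Nat.add_zero, Finset.Icc_self, Finset.sum_singleton, hP0, mul_one] at h
  have := congrArg (fun p => Polynomial.eval 0 p) h
  simpa using this.symm

lemma lc_top_ne (a b c : ℕ → ℝ) (P : ℕ → Polynomial ℝ) (lc : ℕ → ℕ → ℕ → ℝ)
    (hc : ∀ n, 0 < c n)
    (hP0 : P 0 = 1) (hP1 : P 1 = Polynomial.X)
    (hrec : ∀ n, 1 ≤ n →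
      Polynomial.X * P n = Polynomial.C (a n) * P (n - 1) + Polynomial.C (b n) * P n + Polynomial.C (c n) * P (n + 1))
    (hlin : ∀ m n, P m * P n =
      ∑ k ∈ Finset.Icc (Nat.dist m n) (m + n), Polynomial.C (lc m n k) * P k) :
    ∀ n, lc 1 n (n + 1) ≠ 0 := by
  intro n
  have hdeg := Pdeg a b c P hc hP0 hP1 hrec
  have h := hlin 1 n
  rw [hP1] at h
  have hco := congrArg (fun p => Polynomial.coeff p (n+1)) h
  rw [Polynomial.coeff_X_mul] at hco
  rw [Polynomial.finset_sum_coeff] at hco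
  rw [Finset.sum_eq_single_of_mem (n+1)] at hco
  · rw [Polynomial.coeff_C_mul] at hco
    intro hzero
    rw [hzero] at hco
    simp only [zero_mul] at hco
    exact (hdeg n).2 hco
  · rw [Finset.mem_Icc]
    constructor
    · simp only [Nat.dist]
      omega
    · omega
  · intro k hk hne
    rw [Finset.mem_Icc] at hk
    rw [Polynomial.coeff_C_mul, Polynomial.coeff_eq_zero_of_natDegree_lt (lt_of_le_of_lt (hdeg k).1 (by omega)), mul_zero]

lemma mchoose_zero {r : ℕ} (α : Fin r → ℕ) : mchoose α 0 = 1 := by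
  simp [mchoose]

lemma mchoose_self {r : ℕ} (α : Fin r → ℕ) : mchoose α α = 1 := by
  simp [mchoose]

lemma sub_zero_eq {r : ℕ} (α : Fin r → ℕ) : α - 0 = α := by funext i; simp
lemma sub_self_eq {r : ℕ} (α : Fin r → ℕ) : α - α = 0 := by funext i; simp

lemma sum_lt_of_le_of_ne {r : ℕ} {β α : Fin r → ℕ} (h : β ≤ α) (hne : β ≠ α) :
    ∑ i, β i < ∑ i, α i := by
  obtain ⟨j, hj⟩ : ∃ j, β j ≠ α j := by
    by_contra hco
    push_neg at hco
    exact hne (funext hco)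
  apply Finset.sum_lt_sum (fun i _ => h i) ⟨j, Finset.mem_univ j, lt_of_le_of_ne (h j) hj⟩

lemma zeroval {r N : ℕ} (lc : ℕ → ℕ → ℕ → ℝ) (h000 : lc 0 0 0 = 1)
    (χ : (Fin r → ℕ) → ℕ → ℂ) (hχ0 : χ 0 0 = 1)
    (hχ : ∀ α : Fin r → ℕ, (∑ i, α i) ≤ N → ∀ m n : ℕ,
        ∑ k ∈ Finset.Icc (Nat.dist m n) (m + n), (lc m n k : ℂ) * χ α k =
          ∑ β ∈ Finset.Iic α, (mchoose α β : ℂ) * χ β m * χ (α - β) n) :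
    ∀ α : Fin r → ℕ, (∑ i, α i) ≤ N → α ≠ 0 → χ α 0 = 0 := by
  suffices H : ∀ s : ℕ, ∀ α : Fin r → ℕ, ∑ i, α i = s → (∑ i, α i) ≤ N → α ≠ 0 → χ α 0 = 0 by
    intro α hα hne; exact H (∑ i, α i) α rfl hα hne
  intro s
  induction s using Nat.strong_induction_on with
  | _ s ih =>
    intro α hs hα hne
    have hrel := hχ α hα 0 0
    have hd : Nat.dist 0 0 = 0 := by simp [Nat.dist]
    rw [hd] at hrel
    simp only [Nat.add_zero, Finset.Icc_self, Finset.sum_singleton, h000] at hrel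
    rw [Complex.ofReal_one, one_mul] at hrel
    -- reduce RHS sum to {0, α}
    have hvan : ∀ β ∈ Finset.Iic α, β ∉ ({0, α} : Finset (Fin r → ℕ)) →
        (mchoose α β : ℂ) * χ β 0 * χ (α - β) 0 = 0 := by
      intro β hβ hnot
      simp only [Finset.mem_insert, Finset.mem_singleton] at hnot
      push_neg at hnot
      rw [Finset.mem_Iic] at hβ
      have : χ β 0 = 0 := by
        apply ih (∑ i, β i) ?_ β rfl ?_ hnot.1
        · rw [← hs]; exact sum_lt_of_le_of_ne hβ hnot.2
        · calc ∑ i, β i ≤ ∑ i, α i := le_of_lt (sum_lt_of_le_of_ne hβ hnot.2)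
          _ ≤ N := hα
      rw [this, mul_zero, zero_mul]
    have hsub : ({0, α} : Finset (Fin r → ℕ)) ⊆ Finset.Iic α := by
      intro β hβ
      simp only [Finset.mem_insert, Finset.mem_singleton] at hβ
      rw [Finset.mem_Iic]
      rcases hβ with h | h
      · rw [h]; intro i; exact Nat.zero_le _
      · rw [h]
    rw [← Finset.sum_subset hsub hvan] at hrel
    rw [Finset.sum_pair (Ne.symm hne)] at hrel
    rw [mchoose_zero, mchoose_self, sub_zero_eq, sub_self_eq, hχ0] at hrel
    simp only [Nat.cast_one, one_mul, mul_one] at hrel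
    -- hrel : χ α 0 = χ 0 0 * χ α 0 + χ α 0  →  χ α 0 = χ α 0 + χ α 0
    linear_combination -hrel

lemma uniq {r N : ℕ} (lc : ℕ → ℕ → ℕ → ℝ) (h000 : lc 0 0 0 = 1)
    (hne : ∀ n, lc 1 n (n + 1) ≠ 0)
    (φ ψ : (Fin r → ℕ) → ℕ → ℂ) (hφ0 : φ 0 0 = 1) (hψ0 : ψ 0 0 = 1)
    (hφ : ∀ α : Fin r → ℕ, (∑ i, α i) ≤ N → ∀ m n : ℕ,
        ∑ k ∈ Finset.Icc (Nat.dist m n) (m + n), (lc m n k : ℂ) * φ α k =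
          ∑ β ∈ Finset.Iic α, (mchoose α β : ℂ) * φ β m * φ (α - β) n)
    (hψ : ∀ α : Fin r → ℕ, (∑ i, α i) ≤ N → ∀ m n : ℕ,
        ∑ k ∈ Finset.Icc (Nat.dist m n) (m + n), (lc m n k : ℂ) * ψ α k =
          ∑ β ∈ Finset.Iic α, (mchoose α β : ℂ) * ψ β m * ψ (α - β) n)
    (h1 : ∀ β : Fin r → ℕ, (∑ i, β i) ≤ N → φ β 1 = ψ β 1) :
    ∀ α : Fin r → ℕ, (∑ i, α i) ≤ N → ∀ n : ℕ, φ α n = ψ α n := by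
  have hz : ∀ α : Fin r → ℕ, (∑ i, α i) ≤ N → φ α 0 = ψ α 0 := by
    intro α hα
    by_cases h : α = 0
    · subst h; rw [hφ0, hψ0]
    · rw [zeroval lc h000 φ hφ0 hφ α hα h, zeroval lc h000 ψ hψ0 hψ α hα h]
  suffices H : ∀ n : ℕ, ∀ α : Fin r → ℕ, (∑ i, α i) ≤ N → φ α n = ψ α n by
    intro α hα n; exact H n α hα
  intro n
  induction n using Nat.strong_induction_on with
  | _ n ih =>
    match n with
    | 0 => intro α hα; exact hz α hα
    | 1 => intro α hα; exact h1 α hα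
    | (k+2) =>
      intro α hα
      have hrφ := hφ α hα 1 (k+1)
      have hrψ := hψ α hα 1 (k+1)
      have hicc : Finset.Icc (Nat.dist 1 (k+1)) (1 + (k+1)) = {k, k+1, k+2} := by
        ext j
        simp only [Finset.mem_Icc, Finset.mem_insert, Finset.mem_singleton, Nat.dist]
        omega
      rw [hicc] at hrφ hrψ
      have hRHS : ∑ β ∈ Finset.Iic α, (mchoose α β : ℂ) * φ β 1 * φ (α - β) (k+1)
          = ∑ β ∈ Finset.Iic α, (mchoose α β : ℂ) * ψ β 1 * ψ (α - β) (k+1) := by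
        apply Finset.sum_congr rfl
        intro β hβ
        rw [Finset.mem_Iic] at hβ
        have hβN : (∑ i, β i) ≤ N := by
          calc ∑ i, β i ≤ ∑ i, α i := Finset.sum_le_sum (fun i _ => hβ i)
          _ ≤ N := hα
        have hαβN : (∑ i, (α - β) i) ≤ N := by
          calc ∑ i, (α - β) i ≤ ∑ i, α i := Finset.sum_le_sum (fun i _ => Nat.sub_le _ _)
          _ ≤ N := hα
        rw [h1 β hβN, ih (k+1) (by omega) (α - β) hαβN]
      rw [hRHS, ← hrψ] at hrφ
      have hknd : (k : ℕ) ∉ ({k+1, k+2} : Finset ℕ) := by simp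
      have hknd2 : (k+1 : ℕ) ∉ ({k+2} : Finset ℕ) := by simp
      rw [Finset.sum_insert hknd, Finset.sum_insert hknd2, Finset.sum_singleton,
        Finset.sum_insert hknd, Finset.sum_insert hknd2, Finset.sum_singleton] at hrφ
      rw [ih k (by omega) α hα, ih (k+1) (by omega) α hα] at hrφ
      have hlc : (lc 1 (k+1) (k+2) : ℂ) ≠ 0 := by
        simpa using hne (k+1)
      have hfin : (lc 1 (k+1) (k+2) : ℂ) * φ α (k+2) = (lc 1 (k+1) (k+2) : ℂ) * ψ α (k+2) := by
        linear_combination hrφ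
      exact mul_left_cancel₀ hlc hfin


end Aux

theorem moment_sequence_iff_derivatives
    (a b c : ℕ → ℝ) (P : ℕ → Polynomial ℝ) (lc : ℕ → ℕ → ℕ → ℝ)
    (ha0 : a 0 = 0) (hb0 : b 0 = 0)
    (hc : ∀ n, 0 < c n) (hb : ∀ n, 0 ≤ b n) (ha : ∀ n, 0 < a (n + 1))
    (hsum : ∀ n, a n + b n + c n = 1)
    (hP0 : P 0 = 1) (hP1 : P 1 = X)
    (hrec : ∀ n, 1 ≤ n →
      X * P n = C (a n) * P (n - 1) + C (b n) * P n + C (c n) * P (n + 1))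
    (hlin : ∀ m n, P m * P n =
      ∑ k ∈ Finset.Icc (Nat.dist m n) (m + n), C (lc m n k) * P k)
    (hnonneg : ∀ m n k, 0 ≤ lc m n k)
    (r N : ℕ) (hr : 0 < r) (hN : 0 < N)
    (φ : (Fin r → ℕ) → ℕ → ℂ)
    (f : (Fin r → ℝ) → ℂ)
    (hf : ∀ t, f t = ∑ α ∈ (Finset.Iic (fun _ => N : Fin r → ℕ)).filter
        (fun α => ∑ i, α i ≤ N),
      (φ α 1 / (∏ i, Nat.factorial (α i) : ℂ)) * ∏ i, (t i : ℂ) ^ (α i)) :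
    ((φ 0 0 = 1 ∧ ∀ α : Fin r → ℕ, (∑ i, α i) ≤ N → ∀ m n : ℕ,
        ∑ k ∈ Finset.Icc (Nat.dist m n) (m + n), (lc m n k : ℂ) * φ α k =
          ∑ β ∈ Finset.Iic α, (mchoose α β : ℂ) * φ β m * φ (α - β) n)) ↔
      (∀ α : Fin r → ℕ, (∑ i, α i) ≤ N → ∀ n : ℕ,
        φ α n = mpderiv α (fun t => Polynomial.aeval (f t) (P n)) 0) := by
  classical
  set F : MvPolynomial (Fin r) ℂ := Fpoly r N φ with hF
  set G : ℕ → MvPolynomial (Fin r) ℂ := fun n => Polynomial.aeval F (P n) with hG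
  set ψ : (Fin r → ℕ) → ℕ → ℂ :=
    fun α n => (∏ i, ((α i).factorial : ℂ)) * MvPolynomial.coeff (tf α) (G n) with hψdef
  have h_fact_ne : ∀ α : Fin r → ℕ, (∏ i, ((α i).factorial : ℂ)) ≠ 0 := by
    intro α
    apply Finset.prod_ne_zero_iff.2
    intro i _
    exact_mod_cast (α i).factorial_ne_zero
  -- mpderiv computes ψ
  have hmd : ∀ (α : Fin r → ℕ) (n : ℕ),
      mpderiv α (fun t => Polynomial.aeval (f t) (P n)) 0 = ψ α n := by
    intro α n
    have hfun : (fun t => Polynomial.aeval (f t) (P n)) = fun x => ev x (G n) := by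
      funext t
      rw [hG]
      rw [ev_aeval, ev_Fpoly r N φ f hf]
    rw [hfun, mpderiv_ev]
    show ev 0 (Dl α (G n)) = ψ α n
    have h0 : (fun i : Fin r => (((0 : Fin r → ℝ) i : ℝ) : ℂ)) = (fun _ => (0:ℂ)) := by
      funext i; simp
    rw [ev, h0, MvPolynomial.eval_zero', MvPolynomial.constantCoeff_eq, coeff_zero_Dl]
  -- ψ at (0,0)
  have hψ00 : ψ 0 0 = 1 := by
    rw [hψdef]
    simp only
    have hG0 : G 0 = 1 := by rw [hG]; simp [hP0]
    have htf0 : tf (0 : Fin r → ℕ) = 0 := by ext j; simp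
    rw [hG0, htf0]
    simp
  -- ψ at 1 agrees with φ at 1
  have hψ1 : ∀ β : Fin r → ℕ, (∑ i, β i) ≤ N → ψ β 1 = φ β 1 := by
    intro β hβ
    have hG1 : G 1 = F := by rw [hG]; simp [hP1]
    rw [hψdef]
    simp only
    rw [hG1, hF, coeff_Fpoly r N φ β hβ, mul_comm, div_mul_cancel₀ _ (h_fact_ne β)]
  -- ψ satisfies the moment relation
  have hψrel : ∀ (α : Fin r → ℕ) (m n : ℕ),
      ∑ k ∈ Finset.Icc (Nat.dist m n) (m + n), (lc m n k : ℂ) * ψ α k =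
        ∑ β ∈ Finset.Iic α, (mchoose α β : ℂ) * ψ β m * ψ (α - β) n := by
    intro α m n
    have hGmn : G m * G n
        = ∑ k ∈ Finset.Icc (Nat.dist m n) (m + n), MvPolynomial.C ((lc m n k : ℂ)) * G k := by
      rw [hG]
      simp only
      rw [← map_mul, hlin m n, aeval_linear]
    calc ∑ k ∈ Finset.Icc (Nat.dist m n) (m + n), (lc m n k : ℂ) * ψ α k
        = (∏ i, ((α i).factorial : ℂ)) *
          ∑ k ∈ Finset.Icc (Nat.dist m n) (m + n),
            (lc m n k : ℂ) * MvPolynomial.coeff (tf α) (G k) := by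
          rw [Finset.mul_sum]
          apply Finset.sum_congr rfl
          intro k _
          rw [hψdef]
          ring
      _ = (∏ i, ((α i).factorial : ℂ)) * MvPolynomial.coeff (tf α) (G m * G n) := by
          rw [hGmn, MvPolynomial.coeff_sum]
          congr 1
          apply Finset.sum_congr rfl
          intro k _
          rw [MvPolynomial.coeff_C_mul]
      _ = (∏ i, ((α i).factorial : ℂ)) *
          ∑ x ∈ Finset.HasAntidiagonal.antidiagonal (tf α),
            MvPolynomial.coeff x.1 (G m) * MvPolynomial.coeff x.2 (G n) := by
          rw [MvPolynomial.coeff_mul]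
      _ = (∏ i, ((α i).factorial : ℂ)) *
          ∑ β ∈ Finset.Iic α,
            MvPolynomial.coeff (tf β) (G m) * MvPolynomial.coeff (tf (α - β)) (G n) := by
          rw [antidiag_sum α (fun u v => MvPolynomial.coeff u (G m) * MvPolynomial.coeff v (G n))]
      _ = ∑ β ∈ Finset.Iic α, (mchoose α β : ℂ) * ψ β m * ψ (α - β) n := by
          rw [Finset.mul_sum]
          apply Finset.sum_congr rfl
          intro β hβ
          rw [Finset.mem_Iic] at hβ
          have hmf := mchoose_factorial α β hβ
          rw [hψdef]
          simp only
          rw [← hmf]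
          ring
  have h000 := lc_000 P lc hP0 hlin
  have htop := lc_top_ne a b c P lc hc hP0 hP1 hrec hlin
  constructor
  · rintro ⟨h00, hrel⟩ α hα n
    rw [hmd α n]
    exact uniq lc h000 htop φ ψ h00 hψ00 hrel (fun α _ m n => hψrel α m n)
      (fun β hβ => (hψ1 β hβ).symm) α hα n
  · intro h
    have hφψ : ∀ γ : Fin r → ℕ, (∑ i, γ i) ≤ N → ∀ j, φ γ j = ψ γ j := by
      intro γ hγ j
      rw [h γ hγ j, hmd γ j]
    constructor
    · have h0N : (∑ i, (0 : Fin r → ℕ) i) ≤ N := by simp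
      rw [hφψ 0 h0N 0, hψ00]
    · intro α hα m n
      calc ∑ k ∈ Finset.Icc (Nat.dist m n) (m + n), (lc m n k : ℂ) * φ α k
          = ∑ k ∈ Finset.Icc (Nat.dist m n) (m + n), (lc m n k : ℂ) * ψ α k := by
            apply Finset.sum_congr rfl
            intro k _
            rw [hφψ α hα k]
        _ = ∑ β ∈ Finset.Iic α, (mchoose α β : ℂ) * ψ β m * ψ (α - β) n := hψrel α m n
        _ = ∑ β ∈ Finset.Iic α, (mchoose α β : ℂ) * φ β m * φ (α - β) n := by
            apply Finset.sum_congr rfl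
            intro β hβ
            rw [Finset.mem_Iic] at hβ
            have hβN : (∑ i, β i) ≤ N :=
              le_trans (Finset.sum_le_sum (fun i _ => hβ i)) hα
            have hαβN : (∑ i, (α - β) i) ≤ N :=
              le_trans (Finset.sum_le_sum (fun i _ => Nat.sub_le _ _)) hα
            rw [hφψ β hβN m, hφψ (α - β) hαβN n]

end
end

section
/- For the polynomial hypergroup generated by (P_n), suppose φ : ℕ → ℂ and σ : ℕ → ℂ satisfy the sine equation σ(δ_m*δ_n) = σ(m)φ(n) + φ(m)σ(n) with φ an exponential, φ(0)=1. Then σ(0) = 0 and σ(n) = σ(1)·P_n'(φ(1)) for all n. -/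
open Polynomial Finset

/-!
The three-term recurrence forces `deg P_n = n`, so in `P_1 P_n = Σ_k c(1,n,k) P_k` the top
coefficient `c(1,n,n+1)` is nonzero. Hence the functional equations at `(1, n)` determine the
value at `n + 1` from the values at `0, …, n`: an exponential is determined by `φ(0)` and `φ(1)`,
and a sine function for `φ` by `σ(0)` and `σ(1)`. Evaluating the linearization at `λ = φ(1)`
shows that `n ↦ P_n(λ)` is an exponential, and differentiating it before evaluating shows that
`n ↦ P_n'(λ)` is a sine function for it; comparing values at `0` and `1` gives the theorem.
-/

theorem degree_eq_of_three_term_recurrence {R : Type*} [CommRing R] [IsDomain R]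
    {a b c : ℕ → R} {P : ℕ → R[X]} (hc : ∀ n, c n ≠ 0) (hP0 : P 0 = 1) (hP1 : P 1 = X)
    (hrec : ∀ n, 1 ≤ n →
      X * P n = C (a n) * P (n - 1) + C (b n) * P n + C (c n) * P (n + 1))
    (n : ℕ) : (P n).degree = n := by
  suffices ∀ n, (P n).degree = n ∧ (P (n + 1)).degree = ((n + 1 : ℕ) : WithBot ℕ) from
    (this n).1
  intro n
  induction n with
  | zero => simp [hP0, hP1]
  | succ n ih =>
    obtain ⟨hn, hn1⟩ := ih
    refine ⟨hn1, ?_⟩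
    have hsolve : C (c (n + 1)) * P (n + 2) =
        X * P (n + 1) - (C (a (n + 1)) * P n + C (b (n + 1)) * P (n + 1)) := by
      rw [hrec (n + 1) le_add_self, Nat.add_sub_cancel]
      ring
    have hX : (X * P (n + 1)).degree = ((n + 2 : ℕ) : WithBot ℕ) := by
      rw [X_mul, degree_mul_X, hn1]
      rfl
    have hlower : (C (a (n + 1)) * P n + C (b (n + 1)) * P (n + 1)).degree <
        ((n + 2 : ℕ) : WithBot ℕ) := by
      refine (degree_add_le _ _).trans_lt (max_lt ?_ ?_) <;>
        refine (degree_mul_le _ _).trans_lt ?_ <;>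
        refine (add_le_add degree_C_le le_rfl).trans_lt ?_ <;>
        simp [hn, hn1] <;> norm_cast <;> omega
    rw [← degree_C_mul (hc (n + 1)), hsolve, degree_sub_eq_left_of_degree_lt (hX ▸ hlower), hX]

theorem weight_ne_zero_of_X_mul_eq_sum {R : Type*} [Semiring R] {P : ℕ → R[X]}
    (hdeg : ∀ n, (P n).degree = n) {w : ℕ → R} {lo n : ℕ}
    (h : X * P n = ∑ k ∈ Icc lo (1 + n), C (w k) * P k) : w (1 + n) ≠ 0 := by
  intro hw
  have hcoeff := congrArg (coeff · (n + 1)) h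
  simp only [coeff_X_mul, finsetSum_coeff, coeff_C_mul] at hcoeff
  refine coeff_ne_zero_of_eq_degree (hdeg n) (hcoeff.trans (Finset.sum_eq_zero fun k hk => ?_))
  obtain rfl | hlt := eq_or_lt_of_le (Finset.mem_Icc.mp hk).2
  · rw [hw, zero_mul]
  · rw [coeff_eq_zero_of_degree_lt (by rw [hdeg k]; exact_mod_cast (by omega : k < n + 1)),
      mul_zero]

section Hypergroup

variable {A : Type*}

/-- `w m n k` plays the role of the linearization coefficient `c(m, n, k)`. -/
def IsExponential [Semiring A] (w : ℕ → ℕ → ℕ → A) (φ : ℕ → A) : Prop :=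
  ∀ m n, ∑ k ∈ Icc (Nat.dist m n) (m + n), w m n k * φ k = φ m * φ n

def IsSine [Semiring A] (w : ℕ → ℕ → ℕ → A) (φ σ : ℕ → A) : Prop :=
  ∀ m n, ∑ k ∈ Icc (Nat.dist m n) (m + n), w m n k * σ k = σ m * φ n + φ m * σ n

theorem IsSine.const_mul [CommSemiring A] {w : ℕ → ℕ → ℕ → A} {φ σ : ℕ → A}
    (hσ : IsSine w φ σ) (c : A) : IsSine w φ (fun n => c * σ n) := by
  intro m n
  simp_rw [mul_left_comm _ c, ← Finset.mul_sum, hσ m n]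
  ring

theorem IsSine.apply_zero [Ring A] {w : ℕ → ℕ → ℕ → A} {φ σ : ℕ → A}
    (hσ : IsSine w φ σ) (hw : w 0 0 0 = 1) (hφ0 : φ 0 = 1) : σ 0 = 0 := by
  simpa [hw, hφ0] using hσ 0 0

theorem eq_of_sum_Icc_dist_one_eq [Ring A] [NoZeroDivisors A] {w : ℕ → ℕ → A}
    {f g : ℕ → A} (hw : ∀ n, w n (1 + n) ≠ 0) (h0 : f 0 = g 0)
    (hstep : ∀ n, (∀ k ≤ n, f k = g k) →
      ∑ k ∈ Icc (Nat.dist 1 n) (1 + n), w n k * f k =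
        ∑ k ∈ Icc (Nat.dist 1 n) (1 + n), w n k * g k) :
    f = g := by
  funext n
  induction n using Nat.strong_induction_on with
  | _ n ih =>
    cases n with
    | zero => exact h0
    | succ n =>
      have hagree : ∀ k ≤ n, f k = g k := fun k hk => ih k (by omega)
      have hmem : 1 + n ∈ Icc (Nat.dist 1 n) (1 + n) :=
        Finset.mem_Icc.mpr ⟨by simp only [Nat.dist]; omega, le_rfl⟩
      have hrest : ∑ k ∈ (Icc (Nat.dist 1 n) (1 + n)).erase (1 + n), w n k * f k =
          ∑ k ∈ (Icc (Nat.dist 1 n) (1 + n)).erase (1 + n), w n k * g k :=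
        Finset.sum_congr rfl fun k hk => by
          have hk_le := (Finset.mem_Icc.mp (Finset.mem_of_mem_erase hk)).2
          have hk_ne := Finset.ne_of_mem_erase hk
          rw [hagree k (by omega)]
      have htop := hstep n hagree
      rw [← Finset.add_sum_erase _ _ hmem, ← Finset.add_sum_erase _ _ hmem, hrest] at htop
      rw [add_comm n 1]
      exact mul_left_cancel₀ (hw n) (add_right_cancel htop)

theorem IsExponential.ext [CommRing A] [NoZeroDivisors A] {w : ℕ → ℕ → ℕ → A} {φ ψ : ℕ → A}
    (hw : ∀ n, w 1 n (1 + n) ≠ 0) (hφ : IsExponential w φ) (hψ : IsExponential w ψ)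
    (h0 : φ 0 = ψ 0) (h1 : φ 1 = ψ 1) : φ = ψ :=
  eq_of_sum_Icc_dist_one_eq hw h0 fun n hn => by rw [hφ, hψ, h1, hn n le_rfl]

theorem IsSine.ext [CommRing A] [NoZeroDivisors A] {w : ℕ → ℕ → ℕ → A} {φ σ τ : ℕ → A}
    (hw : ∀ n, w 1 n (1 + n) ≠ 0) (hσ : IsSine w φ σ) (hτ : IsSine w φ τ)
    (h0 : σ 0 = τ 0) (h1 : σ 1 = τ 1) : σ = τ :=
  eq_of_sum_Icc_dist_one_eq hw h0 fun n hn => by rw [hσ, hτ, h1, hn n le_rfl]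

variable {R : Type*} [CommSemiring R] [CommSemiring A] [Algebra R A] {P : ℕ → R[X]}
  {lc : ℕ → ℕ → ℕ → R}

theorem isExponential_aeval
    (hlin : ∀ m n, P m * P n = ∑ k ∈ Icc (Nat.dist m n) (m + n), C (lc m n k) * P k) (x : A) :
    IsExponential (fun m n k => algebraMap R A (lc m n k)) (fun n => aeval x (P n)) := by
  intro m n
  rw [← map_mul, hlin, map_sum]
  simp only [map_mul, aeval_C]

theorem isSine_aeval_derivative
    (hlin : ∀ m n, P m * P n = ∑ k ∈ Icc (Nat.dist m n) (m + n), C (lc m n k) * P k) (x : A) :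
    IsSine (fun m n k => algebraMap R A (lc m n k)) (fun n => aeval x (P n))
      (fun n => aeval x (derivative (P n))) := by
  intro m n
  simpa [derivative_mul, map_sum] using
    (congrArg (fun p => aeval x (derivative p)) (hlin m n)).symm

end Hypergroup

theorem sine_function_form_general
    (a b c : ℕ → ℝ) (P : ℕ → Polynomial ℝ) (lc : ℕ → ℕ → ℕ → ℝ)
    (hc : ∀ n, 0 < c n)
    (hP0 : P 0 = 1) (hP1 : P 1 = X)
    (hrec : ∀ n, 1 ≤ n →
      X * P n = C (a n) * P (n - 1) + C (b n) * P n + C (c n) * P (n + 1))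
    (hlin : ∀ m n, P m * P n =
      ∑ k ∈ Finset.Icc (Nat.dist m n) (m + n), C (lc m n k) * P k)
    (φ σ : ℕ → ℂ)
    (hφ0 : φ 0 = 1)
    (hφ : ∀ m n : ℕ,
      ∑ k ∈ Finset.Icc (Nat.dist m n) (m + n), (lc m n k : ℂ) * φ k = φ m * φ n)
    (hσ : ∀ m n : ℕ,
      ∑ k ∈ Finset.Icc (Nat.dist m n) (m + n), (lc m n k : ℂ) * σ k =
        σ m * φ n + φ m * σ n) :
    σ 0 = 0 ∧ ∀ n, σ n = σ 1 * Polynomial.aeval (φ 1) (derivative (P n)) := by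
  have hdeg := degree_eq_of_three_term_recurrence (fun n => (hc n).ne') hP0 hP1 hrec
  have hw : ∀ n, (lc 1 n (1 + n) : ℂ) ≠ 0 := fun n =>
    Complex.ofReal_ne_zero.mpr (weight_ne_zero_of_X_mul_eq_sum hdeg (hP1 ▸ hlin 1 n))
  have hφP : φ = fun n => aeval (φ 1) (P n) :=
    IsExponential.ext hw hφ (isExponential_aeval hlin _) (by simp [hφ0, hP0]) (by simp [hP1])
  have hlc0 : lc 0 0 0 = 1 := C_injective (by simpa [hP0] using (hlin 0 0).symm)
  have hσ0 : σ 0 = 0 := IsSine.apply_zero hσ (by simp [hlc0]) hφ0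
  suffices hσP : σ = fun n => σ 1 * aeval (φ 1) (derivative (P n)) from ⟨hσ0, congrFun hσP⟩
  rw [hφP] at hσ
  exact IsSine.ext hw hσ ((isSine_aeval_derivative hlin (φ 1)).const_mul (σ 1))
    (by simp [hσ0, hP0]) (by simp [hP1])

theorem sine_function_form
    (a b c : ℕ → ℝ) (P : ℕ → Polynomial ℝ) (lc : ℕ → ℕ → ℕ → ℝ)
    (ha0 : a 0 = 0) (hb0 : b 0 = 0)
    (hc : ∀ n, 0 < c n) (hb : ∀ n, 0 ≤ b n) (ha : ∀ n, 0 < a (n + 1))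
    (hsum : ∀ n, a n + b n + c n = 1)
    (hP0 : P 0 = 1) (hP1 : P 1 = X)
    (hrec : ∀ n, 1 ≤ n →
      X * P n = C (a n) * P (n - 1) + C (b n) * P n + C (c n) * P (n + 1))
    (hlin : ∀ m n, P m * P n =
      ∑ k ∈ Finset.Icc (Nat.dist m n) (m + n), C (lc m n k) * P k)
    (hnonneg : ∀ m n k, 0 ≤ lc m n k)
    (φ σ : ℕ → ℂ)
    (hφ0 : φ 0 = 1)
    (hφ : ∀ m n : ℕ,
      ∑ k ∈ Finset.Icc (Nat.dist m n) (m + n), (lc m n k : ℂ) * φ k = φ m * φ n)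
    (hσ : ∀ m n : ℕ,
      ∑ k ∈ Finset.Icc (Nat.dist m n) (m + n), (lc m n k : ℂ) * σ k =
        σ m * φ n + φ m * σ n) :
    σ 0 = 0 ∧ ∀ n, σ n = σ 1 * Polynomial.aeval (φ 1) (derivative (P n)) :=
  sine_function_form_general a b c P lc hc hP0 hP1 hrec hlin φ σ hφ0 hφ hσ
end
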